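/- The cubic Σ passes through the five points D₀, D₁, D_λ, D_t, D_∞, i.e. Σ vanishes at (1,0,0), (1,1,1), (1,λ,λ²), (1,t,t²) and (0,0,1); moreover Σ is tangent at D_t to the conic Π : b₁² − b₀b₂ = 0, i.e. the gradient ∇Σ(1, t, t²) is a nonzero scalar multiple of ∇(b₁² − b₀b₂)(1, t, t²) = (−t², 2t, −1). -/

import Mathlib

/-!
The five incidences are direct substitutions. At `D_t = (1, t, t²)` the three partial
derivatives of `Σ` are `-t(1-t)(λ-t)` times `(-t², 2t, -1)`, and this factor is nonzero
exactly because `t ∉ {0, 1, λ}`.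
-/

/-- The cubic `Σ ⊂ ℙ²(ℂ)`, ramification locus of `Φ̃`. -/
noncomputable def SigmaCubic (l t b₀ b₁ b₂ : ℂ) : ℂ :=
  -(l * t ^ 2) * b₀ ^ 2 * b₁ + l * t * b₀ ^ 2 * b₂
    + (l * t ^ 2 + l * t + t ^ 2) * b₀ * b₁ ^ 2 - (t ^ 2 + l) * b₁ ^ 3
    - 2 * (l * t + t) * b₀ * b₁ * b₂ + (l + t + 1) * b₁ ^ 2 * b₂
    + t * b₀ * b₂ ^ 2 - b₁ * b₂ ^ 2

theorem deriv_cubic {𝕜 : Type*} [NontriviallyNormedField 𝕜] (a b c d x : 𝕜) :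
    deriv (fun y => a * y ^ 3 + b * y ^ 2 + c * y + d) x = 3 * a * x ^ 2 + 2 * b * x + c := by
  have h : HasDerivAt (fun y => a * y ^ 3 + b * y ^ 2 + c * y + d) _ x :=
    ((((hasDerivAt_pow 3 x).const_mul a).add ((hasDerivAt_pow 2 x).const_mul b)).add
      ((hasDerivAt_id x).const_mul c)).add_const d
  rw [h.deriv]
  push_cast
  ring

section PartialDerivatives

variable (l t b₀ b₁ b₂ : ℂ)

theorem deriv_sigmaCubic_b₀ :
    deriv (fun x => SigmaCubic l t x b₁ b₂) b₀ =
      2 * (-(l * t ^ 2) * b₁ + l * t * b₂) * b₀ + (l * t ^ 2 + l * t + t ^ 2) * b₁ ^ 2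
        - 2 * (l * t + t) * b₁ * b₂ + t * b₂ ^ 2 := by
  have h : (fun x => SigmaCubic l t x b₁ b₂) = fun x => 0 * x ^ 3
      + (-(l * t ^ 2) * b₁ + l * t * b₂) * x ^ 2
      + ((l * t ^ 2 + l * t + t ^ 2) * b₁ ^ 2 - 2 * (l * t + t) * b₁ * b₂ + t * b₂ ^ 2) * x
      + (-(t ^ 2 + l) * b₁ ^ 3 + (l + t + 1) * b₁ ^ 2 * b₂ - b₁ * b₂ ^ 2) := by
    funext x; unfold SigmaCubic; ring
  rw [h, deriv_cubic]
  ring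

theorem deriv_sigmaCubic_b₁ :
    deriv (fun x => SigmaCubic l t b₀ x b₂) b₁ =
      -3 * (t ^ 2 + l) * b₁ ^ 2 + 2 * ((l * t ^ 2 + l * t + t ^ 2) * b₀ + (l + t + 1) * b₂) * b₁
        - l * t ^ 2 * b₀ ^ 2 - 2 * (l * t + t) * b₀ * b₂ - b₂ ^ 2 := by
  have h : (fun x => SigmaCubic l t b₀ x b₂) = fun x => -(t ^ 2 + l) * x ^ 3
      + ((l * t ^ 2 + l * t + t ^ 2) * b₀ + (l + t + 1) * b₂) * x ^ 2
      + (-(l * t ^ 2) * b₀ ^ 2 - 2 * (l * t + t) * b₀ * b₂ - b₂ ^ 2) * x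
      + (l * t * b₀ ^ 2 * b₂ + t * b₀ * b₂ ^ 2) := by
    funext x; unfold SigmaCubic; ring
  rw [h, deriv_cubic]
  ring

theorem deriv_sigmaCubic_b₂ :
    deriv (fun x => SigmaCubic l t b₀ b₁ x) b₂ =
      2 * (t * b₀ - b₁) * b₂ + l * t * b₀ ^ 2 - 2 * (l * t + t) * b₀ * b₁
        + (l + t + 1) * b₁ ^ 2 := by
  have h : (fun x => SigmaCubic l t b₀ b₁ x) = fun x => 0 * x ^ 3 + (t * b₀ - b₁) * x ^ 2
      + (l * t * b₀ ^ 2 - 2 * (l * t + t) * b₀ * b₁ + (l + t + 1) * b₁ ^ 2) * x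
      + (-(l * t ^ 2) * b₀ ^ 2 * b₁ + (l * t ^ 2 + l * t + t ^ 2) * b₀ * b₁ ^ 2
        - (t ^ 2 + l) * b₁ ^ 3) := by
    funext x; unfold SigmaCubic; ring
  rw [h, deriv_cubic]
  ring

end PartialDerivatives

theorem sigma_through_five_points_general (l t : ℂ)
    (ht0 : t ≠ 0) (ht1 : t ≠ 1) (htl : t ≠ l) :
    SigmaCubic l t 1 0 0 = 0 ∧
    SigmaCubic l t 1 1 1 = 0 ∧
    SigmaCubic l t 1 l (l ^ 2) = 0 ∧
    SigmaCubic l t 1 t (t ^ 2) = 0 ∧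
    SigmaCubic l t 0 0 1 = 0 ∧
    ∃ c : ℂ, c ≠ 0 ∧
      deriv (fun x => SigmaCubic l t x t (t ^ 2)) 1 = c * (-(t ^ 2)) ∧
      deriv (fun x => SigmaCubic l t 1 x (t ^ 2)) t = c * (2 * t) ∧
      deriv (fun x => SigmaCubic l t 1 t x) (t ^ 2) = c * (-1) := by
  have hc : -(t * (1 - t) * (l - t)) ≠ 0 :=
    neg_ne_zero.mpr (mul_ne_zero (mul_ne_zero ht0 (sub_ne_zero.mpr ht1.symm))
      (sub_ne_zero.mpr htl.symm))
  refine ⟨?_, ?_, ?_, ?_, ?_, -(t * (1 - t) * (l - t)), hc, ?_, ?_, ?_⟩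
  iterate 5 (unfold SigmaCubic; ring)
  · rw [deriv_sigmaCubic_b₀]; ring
  · rw [deriv_sigmaCubic_b₁]; ring
  · rw [deriv_sigmaCubic_b₂]; ring

/-- The cubic `Σ` passes through the five points `D₀, D₁, D_λ, D_t, D_∞`, i.e. it vanishes
at `(1,0,0)`, `(1,1,1)`, `(1,λ,λ²)`, `(1,t,t²)` and `(0,0,1)`; moreover `Σ` is tangent at
`D_t` to the conic `Π : b₁² − b₀b₂ = 0`, i.e. the gradient `∇Σ(1, t, t²)` is a nonzero
scalar multiple of `∇(b₁² − b₀b₂)(1, t, t²) = (−t², 2t, −1)`. -/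
theorem sigma_through_five_points (l t : ℂ) (hl0 : l ≠ 0) (hl1 : l ≠ 1)
    (ht0 : t ≠ 0) (ht1 : t ≠ 1) (htl : t ≠ l) :
    SigmaCubic l t 1 0 0 = 0 ∧
    SigmaCubic l t 1 1 1 = 0 ∧
    SigmaCubic l t 1 l (l ^ 2) = 0 ∧
    SigmaCubic l t 1 t (t ^ 2) = 0 ∧
    SigmaCubic l t 0 0 1 = 0 ∧
    ∃ c : ℂ, c ≠ 0 ∧
      deriv (fun x => SigmaCubic l t x t (t ^ 2)) 1 = c * (-(t ^ 2)) ∧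
      deriv (fun x => SigmaCubic l t 1 x (t ^ 2)) t = c * (2 * t) ∧
      deriv (fun x => SigmaCubic l t 1 t x) (t ^ 2) = c * (-1) :=
  sigma_through_five_points_general l t ht0 ht1 htl
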